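/- arXiv:2106.08928 — 8 statements merged into one kernel-verified Lean document; each statement's English description precedes it below -/
import Mathlib

section
/- Let P be a positive definite diagonal matrix and W a real n×n matrix such that P(g|W| - I) + (g|W| - I)ᵀP ≺ 0, where |W| is the entrywise absolute value of W and g > 0. Then for every diagonal matrix D with 0 ⪯ D ⪯ gI, the matrix P(WD - I) + (WD - I)ᵀP is negative definite. -/
open Matrix

/-- `X ≺ 0`: negative definiteness of a (symmetric) real matrix. -/
def NegDef {n : ℕ} (X : Matrix (Fin n) (Fin n) ℝ) : Prop :=
  ∀ x : Fin n → ℝ, x ≠ 0 → x ⬝ᵥ X.mulVec x < 0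

lemma diag_mulVec {n : ℕ} (P : Matrix (Fin n) (Fin n) ℝ) (hP : P.IsDiag)
    (z : Fin n → ℝ) (i : Fin n) : P.mulVec z i = P i i * z i := by
  unfold Matrix.mulVec dotProduct
  rw [Finset.sum_eq_single i]
  · intro j _ hj
    simp [hP (Ne.symm hj)]
  · intro h; exact absurd (Finset.mem_univ i) h

lemma quad_eq {n : ℕ} (P A : Matrix (Fin n) (Fin n) ℝ) (hP : P.IsDiag) (x : Fin n → ℝ) :
    x ⬝ᵥ (P * A + Aᵀ * P).mulVec x = ∑ i, 2 * (P i i * (x i * A.mulVec x i)) := by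
  rw [Matrix.add_mulVec, dotProduct_add, ← Matrix.mulVec_mulVec, ← Matrix.mulVec_mulVec,
    Matrix.dotProduct_mulVec x Aᵀ, Matrix.vecMul_transpose]
  unfold dotProduct
  rw [← Finset.sum_add_distrib]
  apply Finset.sum_congr rfl
  intro i _
  rw [diag_mulVec P hP, diag_mulVec P hP]
  ring

/-- If `P` is a positive definite diagonal matrix and
`P(g|W| - I) + (g|W| - I)ᵀP ≺ 0`, where `|W|` is the entrywise absolute value of `W`
and `g > 0`, then for every diagonal `D` with `0 ⪯ D ⪯ gI`,
`P(WD - I) + (WD - I)ᵀP` is negative definite. -/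
theorem stmt2 {n : ℕ} (W P : Matrix (Fin n) (Fin n) ℝ) (g : ℝ) (hg : 0 < g)
    (hPdiag : P.IsDiag) (hPpos : ∀ i, 0 < P i i)
    (absW : Matrix (Fin n) (Fin n) ℝ) (habsW : ∀ i j, absW i j = |W i j|)
    (hcond : NegDef (P * (g • absW - 1) + (g • absW - 1)ᵀ * P)) :
    ∀ D : Matrix (Fin n) (Fin n) ℝ, D.IsDiag → (∀ i, 0 ≤ D i i ∧ D i i ≤ g) →
      NegDef (P * (W * D - 1) + (W * D - 1)ᵀ * P) := by
  intro D hDdiag hDbound x hx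
  set y : Fin n → ℝ := fun i => |x i| with hy
  have hy0 : y ≠ 0 := by
    intro h
    apply hx
    funext i
    have := congrFun h i
    simpa [hy, abs_eq_zero] using this
  have key := hcond y hy0
  rw [quad_eq _ _ hPdiag] at key ⊢
  refine lt_of_le_of_lt (Finset.sum_le_sum ?_) key
  intro i _
  have hmv1 : (W * D - 1).mulVec x i = (∑ j, W i j * (D j j * x j)) - x i := by
    rw [Matrix.sub_mulVec, ← Matrix.mulVec_mulVec]
    simp only [Pi.sub_apply, Matrix.one_mulVec]
    congr 1
    have hD : D *ᵥ x = fun j => D j j * x j := funext fun j => diag_mulVec D hDdiag x j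
    rw [hD]
    simp [Matrix.mulVec, dotProduct]
  have hmv2 : (g • absW - 1).mulVec y i = (∑ j, g * (|W i j| * y j)) - y i := by
    rw [Matrix.sub_mulVec]
    simp only [Pi.sub_apply, Matrix.one_mulVec]
    congr 1
    unfold Matrix.mulVec dotProduct
    refine Finset.sum_congr rfl fun j _ => ?_
    dsimp only
    rw [Matrix.smul_apply, habsW, smul_eq_mul]
    ring
  rw [hmv1, hmv2]
  have hterm : x i * (∑ j, W i j * (D j j * x j)) ≤ y i * (∑ j, g * (|W i j| * y j)) := by
    rw [Finset.mul_sum, Finset.mul_sum]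
    refine Finset.sum_le_sum fun j _ => ?_
    have h1 : x i * (W i j * (D j j * x j)) = (x i * W i j * x j) * D j j := by ring
    have h2 : y i * (g * (|W i j| * y j)) = |x i * W i j * x j| * g := by
      rw [abs_mul, abs_mul]; simp only [hy]; ring
    rw [h1, h2]
    calc x i * W i j * x j * D j j ≤ |x i * W i j * x j| * D j j :=
          mul_le_mul_of_nonneg_right (le_abs_self _) (hDbound j).1
      _ ≤ |x i * W i j * x j| * g :=
          mul_le_mul_of_nonneg_left (hDbound j).2 (abs_nonneg _)
  have hsq : x i * x i = y i * y i := by simp [hy, ← abs_mul, abs_mul_self]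
  have hP := (hPpos i).le
  nlinarith [hterm, hsq, hP]
end

section
/- Let W = [[0,-2],[2,0]] and let D1 = diag(1,0), D2 = diag(0,1). There exists no symmetric positive definite 2×2 matrix M such that both (M W D1)_sym - M and (M W D2)_sym - M are negative definite, where A_sym := (A + Aᵀ)/2. -/
open Matrix

/-- The symmetric part `(A + Aᵀ)/2` of a matrix. -/
noncomputable def symPart {n : ℕ} (A : Matrix (Fin n) (Fin n) ℝ) : Matrix (Fin n) (Fin n) ℝ :=
  (1/2 : ℝ) • (A + Aᵀ)

/-!
Write `M = [[a, b], [b, c]]`. The two matrices that should be negative definite are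
`[[2b - a, c - b], [c - b, -c]]` and `[[-a, -a - b], [-a - b, -2b - c]]`; a negative definite
`2 × 2` matrix has positive determinant, but the two determinants add up to
`-(a - c)² - 2b² ≤ 0`.
-/

lemma isSymm_symPart {n : ℕ} (A : Matrix (Fin n) (Fin n) ℝ) : (symPart A).IsSymm := by
  simp only [IsSymm, symPart, transpose_smul, transpose_add, transpose_transpose, add_comm]

lemma NegDef.posDef_neg {n : ℕ} {X : Matrix (Fin n) (Fin n) ℝ} (hX : X.IsSymm)
    (h : NegDef X) : (-X).PosDef :=
  .of_dotProduct_mulVec_pos (by simpa [IsHermitian, IsSymm] using hX) fun x hx => by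
    simpa [neg_mulVec] using h x hx

lemma NegDef.det_pos {X : Matrix (Fin 2) (Fin 2) ℝ} (hX : X.IsSymm) (h : NegDef X) :
    0 < X.det := by
  simpa [det_neg] using (h.posDef_neg hX).det_pos

lemma det_add_det_symPart_sub_eq {M : Matrix (Fin 2) (Fin 2) ℝ} (hM : M.IsSymm) :
    (symPart (M * !![0, -2; 2, 0] * !![1, 0; 0, 0]) - M).det +
      (symPart (M * !![0, -2; 2, 0] * !![0, 0; 0, 1]) - M).det =
      -((M 0 0 - M 1 1) ^ 2 + 2 * M 0 1 ^ 2) := by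
  have hb : M 1 0 = M 0 1 := hM.apply 0 1
  simp only [symPart, det_fin_two, mul_apply, Fin.sum_univ_two, Matrix.sub_apply,
    Matrix.smul_apply, Matrix.add_apply, transpose_apply, hb, of_apply, cons_val', cons_val_zero,
    cons_val_one, empty_val', cons_val_fin_one, smul_eq_mul]
  ring

/-- For `W = [[0,-2],[2,0]]`, `D1 = diag(1,0)`, `D2 = diag(0,1)`, there is no symmetric
positive definite `M` with both `(M W D1)_sym - M` and `(M W D2)_sym - M` negative
definite. -/
theorem stmt5 (W D1 D2 : Matrix (Fin 2) (Fin 2) ℝ)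
    (hW : W = !![0, -2; 2, 0]) (hD1 : D1 = !![1, 0; 0, 0]) (hD2 : D2 = !![0, 0; 0, 1]) :
    ¬ ∃ M : Matrix (Fin 2) (Fin 2) ℝ, M.PosDef ∧
        NegDef (symPart (M * W * D1) - M) ∧ NegDef (symPart (M * W * D2) - M) := by
  subst hW hD1 hD2
  rintro ⟨M, hM, h1, h2⟩
  have hMsymm : M.IsSymm := hM.isHermitian
  have hdet1 := h1.det_pos ((isSymm_symPart _).sub hMsymm)
  have hdet2 := h2.det_pos ((isSymm_symPart _).sub hMsymm)
  have hsum := det_add_det_symPart_sub_eq hMsymm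
  linarith [sq_nonneg (M 0 0 - M 1 1), sq_nonneg (M 0 1)]
end

section
/- Let W = [[0,-4],[4,0]], ε = 1/2, D1 = diag(1,ε), D2 = diag(ε,1). There exists no symmetric positive definite 2×2 matrix M such that both (M W D1)_sym - M ≺ 0 and (M W D2)_sym - M ≺ 0. -/
open Matrix

/-- For `W = [[0,-4],[4,0]]`, `ε = 1/2`, `D1 = diag(1,ε)`, `D2 = diag(ε,1)`, there is no
symmetric positive definite `M` with both `(M W D1)_sym - M ≺ 0` and
`(M W D2)_sym - M ≺ 0`. -/
theorem stmt6 (W D1 D2 : Matrix (Fin 2) (Fin 2) ℝ)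
    (hW : W = !![0, -4; 4, 0])
    (hD1 : D1 = !![1, 0; 0, 1/2]) (hD2 : D2 = !![1/2, 0; 0, 1]) :
    ¬ ∃ M : Matrix (Fin 2) (Fin 2) ℝ, M.PosDef ∧
        NegDef (symPart (M * W * D1) - M) ∧ NegDef (symPart (M * W * D2) - M) := by
  rintro ⟨M, hM, h1, h2⟩
  have hx : (![1, 1] : Fin 2 → ℝ) ≠ 0 := by
    intro h
    have := congrFun h 0
    simp at this
  have hy : (![1, -1] : Fin 2 → ℝ) ≠ 0 := by
    intro h
    have := congrFun h 0
    simp at this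
  have q1 := h1 ![1, 1] hx
  have q2 := h2 ![1, -1] hy
  have hb : M 1 0 = M 0 1 := by
    have := Matrix.IsHermitian.apply hM.1 1 0
    simpa using this.symm
  subst hW hD1 hD2
  simp only [symPart, dotProduct, mulVec, Matrix.sub_apply, Matrix.smul_apply,
    Matrix.add_apply, Matrix.transpose_apply, Matrix.mul_apply, Fin.sum_univ_two,
    Matrix.cons_val', Matrix.cons_val_zero, Matrix.cons_val_one, Matrix.head_cons,
    Matrix.empty_val', Matrix.cons_val_fin_one, Matrix.head_fin_const, smul_eq_mul] at q1 q2
  norm_num at q1 q2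
  linarith
end

section
/- Let P1, P2 be positive definite diagonal matrices and Q a symmetric positive definite matrix, and set W = -P1 Q P2 and M = (P1 Q P1)⁻¹. Then for every diagonal matrix D with nonnegative entries, M W D = -P1⁻¹ P2 D, and consequently the symmetric part of M(WD - I) is negative definite. -/
/-!
The factors `P1 Q` cancel in `M W = (P1 Q P1)⁻¹ (-(P1 Q P2)) = -P1⁻¹ P2`. Hence
`-M (W D - I) = M + P1⁻¹ P2 D` is a positive definite matrix (the inverse of the congruence
`P1 Q P1` of `Q`) plus a nonnegative diagonal matrix, so it is positive definite; and the
symmetric part of a matrix has the same quadratic form as the matrix itself.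
-/

open Matrix

namespace Matrix

variable {n : Type*} [Fintype n]

theorem dotProduct_transpose_mulVec_self {R : Type*} [CommSemiring R] (A : Matrix n n R)
    (x : n → R) : x ⬝ᵥ Aᵀ *ᵥ x = x ⬝ᵥ A *ᵥ x := by
  rw [mulVec_transpose, dotProduct_comm, ← dotProduct_mulVec]

theorem dotProduct_half_smul_add_transpose_mulVec {K : Type*} [Field K] [NeZero (2 : K)]
    (A : Matrix n n K) (x : n → K) :
    x ⬝ᵥ ((1 / 2 : K) • (A + Aᵀ)) *ᵥ x = x ⬝ᵥ A *ᵥ x := by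
  rw [smul_mulVec, dotProduct_smul, add_mulVec, dotProduct_add,
    dotProduct_transpose_mulVec_self, smul_eq_mul, ← two_mul, ← mul_assoc,
    one_div_mul_cancel two_ne_zero, one_mul]

variable [DecidableEq n]

theorem inv_diagonal_of_ne_zero {K : Type*} [Field K] {v : n → K} (hv : ∀ i, v i ≠ 0) :
    (diagonal v)⁻¹ = diagonal v⁻¹ := by
  refine inv_eq_right_inv ?_
  rw [diagonal_mul_diagonal, ← diagonal_one]
  congr 1
  ext i
  exact mul_inv_cancel₀ (hv i)

theorem nonsing_inv_mul_mul_mul_cancel {R : Type*} [CommRing R] {A B : Matrix n n R}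
    (C E : Matrix n n R) (hA : IsUnit A) (hB : IsUnit B) :
    (A * B * C)⁻¹ * (A * B * E) = C⁻¹ * E := by
  rw [mul_inv_rev, mul_inv_rev, mul_assoc, mul_assoc, mul_assoc A,
    nonsing_inv_mul_cancel_left _ _ ((isUnit_iff_isUnit_det A).1 hA),
    nonsing_inv_mul_cancel_left _ _ ((isUnit_iff_isUnit_det B).1 hB)]

theorem PosDef.diagonal_mul_mul_diagonal {R : Type*} [CommRing R] [PartialOrder R] [StarRing R]
    [TrivialStar R] {Q : Matrix n n R} (hQ : Q.PosDef) {v : n → R} (hv : IsUnit v) :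
    (diagonal v * Q * diagonal v).PosDef := by
  simpa [star_eq_conjTranspose] using
    (IsUnit.posDef_star_left_conjugate_iff (isUnit_diagonal.2 hv)).2 hQ

end Matrix

theorem negDef_half_smul_add_transpose {n : ℕ} {A : Matrix (Fin n) (Fin n) ℝ}
    (hA : (-A).PosDef) : NegDef ((1 / 2 : ℝ) • (A + Aᵀ)) := by
  intro x hx
  have hpos := hA.dotProduct_mulVec_pos hx
  rw [star_trivial, neg_mulVec, dotProduct_neg, neg_pos] at hpos
  rwa [dotProduct_half_smul_add_transpose_mulVec]

/-- If `P1, P2` are positive definite diagonal matrices, `Q` is symmetric positive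
definite, `W = -P1 Q P2` and `M = (P1 Q P1)⁻¹`, then for every diagonal `D ⪰ 0`,
`M W D = -P1⁻¹ P2 D`, and the symmetric part of `M(WD - I)` is negative definite. -/
theorem stmt8 {n : ℕ} (P1 P2 Q : Matrix (Fin n) (Fin n) ℝ)
    (hP1diag : P1.IsDiag) (hP1pos : ∀ i, 0 < P1 i i)
    (hP2diag : P2.IsDiag) (hP2pos : ∀ i, 0 < P2 i i)
    (hQ : Q.PosDef)
    (W M : Matrix (Fin n) (Fin n) ℝ)
    (hW : W = -(P1 * Q * P2)) (hM : M = (P1 * Q * P1)⁻¹) :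
    ∀ D : Matrix (Fin n) (Fin n) ℝ, D.IsDiag → (∀ i, 0 ≤ D i i) →
      M * W * D = -(P1⁻¹ * P2 * D) ∧
      NegDef ((1/2 : ℝ) • (M * (W * D - 1) + (M * (W * D - 1))ᵀ)) := by
  intro D hD hDpos
  obtain ⟨p1, rfl⟩ : ∃ p, P1 = diagonal p := ⟨P1.diag, hP1diag.diagonal_diag.symm⟩
  obtain ⟨p2, rfl⟩ : ∃ p, P2 = diagonal p := ⟨P2.diag, hP2diag.diagonal_diag.symm⟩
  obtain ⟨d, rfl⟩ : ∃ p, D = diagonal p := ⟨D.diag, hD.diagonal_diag.symm⟩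
  simp only [diagonal_apply_eq] at hP1pos hP2pos hDpos
  have hp1 : IsUnit p1 := Pi.isUnit_iff.2 fun i => (hP1pos i).ne'.isUnit
  have hMWD : M * W * diagonal d = -((diagonal p1)⁻¹ * diagonal p2 * diagonal d) := by
    rw [hM, hW, mul_neg,
      nonsing_inv_mul_mul_mul_cancel _ _ (isUnit_diagonal.2 hp1) hQ.isUnit, neg_mul]
  refine ⟨hMWD, negDef_half_smul_add_transpose ?_⟩
  have hneg : -(M * (W * diagonal d - 1)) = M + diagonal fun i => (p1 i)⁻¹ * p2 i * d i := by
    rw [mul_sub, mul_one, ← mul_assoc, hMWD, inv_diagonal_of_ne_zero fun i => (hP1pos i).ne',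
      diagonal_mul_diagonal, diagonal_mul_diagonal, neg_sub, sub_neg_eq_add]
    rfl
  rw [hneg]
  exact (hM ▸ (hQ.diagonal_mul_mul_diagonal hp1).inv).add_posSemidef <| .diagonal fun i =>
    mul_nonneg (mul_nonneg (inv_nonneg.2 (hP1pos i).le) (hP2pos i).le) (hDpos i)
end

section
/- Let P be a positive definite diagonal n×n matrix, R a symmetric n×n matrix, and D a diagonal matrix with entries in [0,g]. If (2-β)P - (g/2)R² ⪰ 0 for some β ∈ (0,2) and PDP ≻ 0, then the block matrix [[(2-β)P, -RDP],[-PDR, 2PDP]] is positive semidefinite. -/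
/-!
Take the Schur complement with respect to the block `2PDP`. Since `PDP ≻ 0` forces `P` and `D` to
be invertible, `RDP (2PDP)⁻¹ PDR = ½RDR`, so the complement `(2-β)P - ½RDR` is the sum of the
assumed positive semidefinite `(2-β)P - (g/2)R²` and `½ Rᵀ(g - D)R ⪰ 0`.
-/

open Matrix

variable {n : Type*} [DecidableEq n]

theorem Matrix.mul_mul_inv_mul_mul_cancel [Fintype n] {K : Type*} [Field K]
    {P D : Matrix n n K} (h : IsUnit (P * D * P)) : D * P * (P * D * P)⁻¹ * (P * D) = D := by
  rw [isUnit_iff_isUnit_det, det_mul, det_mul, IsUnit.mul_iff, IsUnit.mul_iff] at h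
  obtain ⟨⟨hP, hD⟩, -⟩ := h
  rw [mul_inv_rev, mul_inv_rev]
  simp only [Matrix.mul_assoc, mul_nonsing_inv_cancel_left _ _ hP,
    nonsing_inv_mul_cancel_left _ _ hP, mul_nonsing_inv_cancel_left _ _ hD]

theorem Matrix.IsDiag.posSemidef_smul_one_sub {D : Matrix n n ℝ} (hD : D.IsDiag) {g : ℝ}
    (hg : ∀ i, D i i ≤ g) : (g • 1 - D).PosSemidef := by
  rw [← hD.diagonal_diag, ← diagonal_one, ← diagonal_smul, diagonal_sub]
  exact posSemidef_diagonal_iff.mpr fun i => by simpa using hg i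

theorem Matrix.posSemidef_fromBlocks_neg_of_posSemidef_sub [Fintype n]
    {A P R D : Matrix n n ℝ} {g : ℝ} (hP : P.IsSymm) (hR : R.IsSymm) (hD : D.IsSymm)
    (hDg : (g • 1 - D).PosSemidef) (hA : (A - (g / 2) • (R * R)).PosSemidef)
    (hPDP : (P * D * P).PosDef) :
    (fromBlocks A (-(R * D * P)) (-(P * D * R)) ((2 : ℝ) • (P * D * P))).PosSemidef := by
  have hQ : ((2 : ℝ) • (P * D * P)).PosDef := hPDP.smul two_pos
  let := hQ.isUnit.invertible
  have hB : (-(R * D * P))ᴴ = -(P * D * R) := by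
    simp only [conjTranspose_eq_transpose_of_trivial, transpose_neg, transpose_mul, hP.eq,
      hR.eq, hD.eq, Matrix.mul_assoc]
  have hschur : -(R * D * P) * ((2 : ℝ) • (P * D * P))⁻¹ * -(P * D * R)
      = (2 : ℝ)⁻¹ • (R * D * R) := by
    simp only [Matrix.neg_mul, Matrix.mul_neg, neg_neg]
    rw [inv_smul _ (2 : ℝ) ((isUnit_iff_isUnit_det _).mp hPDP.isUnit), invOf_eq_inv,
      Matrix.mul_smul, Matrix.smul_mul]
    conv_rhs => rw [← mul_mul_inv_mul_mul_cancel hPDP.isUnit]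
    simp only [Matrix.mul_assoc]
  have hsplit : A - (2 : ℝ)⁻¹ • (R * D * R)
      = (A - (g / 2) • (R * R)) + (2 : ℝ)⁻¹ • (Rᴴ * (g • 1 - D) * R) := by
    rw [conjTranspose_eq_transpose_of_trivial, hR.eq, Matrix.mul_sub, Matrix.sub_mul,
      Matrix.mul_smul, Matrix.smul_mul, Matrix.mul_one, smul_sub, smul_smul, div_eq_inv_mul]
    abel
  rw [← hB, PosDef.fromBlocks₂₂ _ _ hQ, hB, hschur, hsplit]
  exact hA.add ((hDg.conjTranspose_mul_mul_same R).smul (by norm_num))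

theorem stmt11_general {n : ℕ} (P R D : Matrix (Fin n) (Fin n) ℝ) (g β : ℝ)
    (hPdiag : P.IsDiag)
    (hR : Rᵀ = R)
    (hDdiag : D.IsDiag) (hD : ∀ i, 0 ≤ D i i ∧ D i i ≤ g)
    (hschur : ((2 - β) • P - (g / 2) • (R * R)).PosSemidef)
    (hPDP : (P * D * P).PosDef) :
    (Matrix.fromBlocks ((2 - β) • P) (-(R * D * P)) (-(P * D * R))
      ((2 : ℝ) • (P * D * P))).PosSemidef :=
  posSemidef_fromBlocks_neg_of_posSemidef_sub hPdiag.isSymm hR hDdiag.isSymm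
    (hDdiag.posSemidef_smul_one_sub fun i => (hD i).2) hschur hPDP

/-- Let `P` be a positive definite diagonal matrix, `R` symmetric, and `D` diagonal with
entries in `[0, g]`. If `(2-β)P - (g/2)R² ⪰ 0` for some `β ∈ (0,2)` and `PDP ≻ 0`, then
the block matrix `[[(2-β)P, -RDP],[-PDR, 2PDP]]` is positive semidefinite. -/
theorem stmt11 {n : ℕ} (P R D : Matrix (Fin n) (Fin n) ℝ) (g β : ℝ)
    (hPdiag : P.IsDiag) (hPpos : ∀ i, 0 < P i i)
    (hR : Rᵀ = R)
    (hDdiag : D.IsDiag) (hD : ∀ i, 0 ≤ D i i ∧ D i i ≤ g)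
    (hβ : 0 < β) (hβ2 : β < 2)
    (hschur : ((2 - β) • P - (g / 2) • (R * R)).PosSemidef)
    (hPDP : (P * D * P).PosDef) :
    (Matrix.fromBlocks ((2 - β) • P) (-(R * D * P)) (-(P * D * R))
      ((2 : ℝ) • (P * D * P))).PosSemidef :=
  stmt11_general P R D g β hPdiag hR hDdiag hD hschur hPDP
end

section
/- Let W be a real n×n matrix, P a positive definite diagonal matrix, and g > 0, such that g²WᵀPW - P ≺ 0. Then the 2-norm of P^{1/2} W P^{-1/2} is strictly less than 1/g; consequently, for any diagonal D with 0 ⪯ D ⪯ gI, the matrix measure μ₂ of -I + P^{1/2}WP^{-1/2}D is negative. -/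
open Matrix

/-- The Euclidean norm of a vector. -/
noncomputable def eNorm {n : ℕ} (x : Fin n → ℝ) : ℝ := Real.sqrt (∑ i, (x i) ^ 2)

/-! With `S = P^{1/2}` and `x = S z`, the hypothesis at `z` reads `g² ‖S W S⁻¹ x‖² < ‖x‖²`;
since the unit sphere is compact, this strict pointwise bound gives `‖S W S⁻¹‖ < 1/g` for the
spectral norm. For diagonal `0 ⪯ D ⪯ gI` it follows that `B = S W S⁻¹ D` has `‖B‖ < 1`, and then
`xᵀ(-I + B)x ≤ (‖B‖ - 1) ‖x‖² < 0`, which is the quadratic form of the symmetric part. -/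

open scoped Matrix.Norms.L2Operator
open WithLp (toLp)

theorem ContinuousLinearMap.opNorm_lt_of_norm_apply_lt {E F : Type*}
    [NormedAddCommGroup E] [NormedSpace ℝ E] [FiniteDimensional ℝ E]
    [NormedAddCommGroup F] [NormedSpace ℝ F] (f : E →L[ℝ] F) {c : ℝ} (hc : 0 < c)
    (h : ∀ x, x ≠ 0 → ‖f x‖ < c * ‖x‖) : ‖f‖ < c := by
  cases subsingleton_or_nontrivial E
  · rwa [f.opNorm_subsingleton]
  obtain ⟨x, hx, hfx⟩ := ((isCompact_sphere (0 : E) 1).image f.continuous.norm).sSup_mem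
    ((NormedSpace.sphere_nonempty.mpr zero_le_one).image _)
  rw [f.sSup_sphere_eq_norm] at hfx
  have hx1 : ‖x‖ = 1 := mem_sphere_zero_iff_norm.mp hx
  simpa [← hfx, hx1] using h x (norm_ne_zero_iff.mp (by simp [hx1]))

theorem EuclideanSpace.norm_toLp_sq {ι : Type*} [Fintype ι] (v : ι → ℝ) :
    ‖toLp 2 v‖ ^ 2 = v ⬝ᵥ v := by
  rw [← real_inner_self_eq_norm_sq, EuclideanSpace.inner_toLp_toLp, star_trivial]

namespace Matrix

variable {m n : Type*} [Fintype m] [Fintype n]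

theorem dotProduct_transpose_mul_self_mulVec {R : Type*} [CommSemiring R]
    (B : Matrix m n R) (x : n → R) : x ⬝ᵥ (Bᵀ * B) *ᵥ x = (B *ᵥ x) ⬝ᵥ (B *ᵥ x) := by
  rw [← mulVec_mulVec, dotProduct_transpose_mulVec]

theorem l2_opNorm_lt_of_norm_mulVec_lt [DecidableEq n] (A : Matrix m n ℝ) {c : ℝ} (hc : 0 < c)
    (h : ∀ x, x ≠ 0 → ‖toLp 2 (A *ᵥ x)‖ < c * ‖toLp 2 x‖) : ‖A‖ < c := by
  rw [l2_opNorm_def]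
  refine ContinuousLinearMap.opNorm_lt_of_norm_apply_lt _ hc fun x hx => h x.ofLp ?_
  simpa using hx

end Matrix

theorem eNorm_eq_norm_toLp {n : ℕ} (x : Fin n → ℝ) : eNorm x = ‖toLp 2 x‖ := by
  simp [eNorm, EuclideanSpace.norm_eq]

theorem mul_norm_mulVec_conj_lt_of_negDef {n : ℕ} {W S T : Matrix (Fin n) (Fin n) ℝ} {g : ℝ}
    (hST : S * T = 1) (hcond : NegDef (g ^ 2 • (Wᵀ * (Sᵀ * S) * W) - Sᵀ * S))
    (x : Fin n → ℝ) (hx : x ≠ 0) : g * ‖toLp 2 ((S * W * T) *ᵥ x)‖ < ‖toLp 2 x‖ := by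
  set z := T *ᵥ x
  have hSz : S *ᵥ z = x := by rw [mulVec_mulVec, hST, one_mulVec]
  have hz : z ≠ 0 := fun h => hx (by rw [← hSz, h, mulVec_zero])
  have hMx : (S * W * T) *ᵥ x = (S * W) *ᵥ z := by rw [mulVec_mulVec]
  have hSW : Wᵀ * (Sᵀ * S) * W = (S * W)ᵀ * (S * W) := by
    simp only [transpose_mul, Matrix.mul_assoc]
  have key := hcond z hz
  rw [sub_mulVec, dotProduct_sub, smul_mulVec, dotProduct_smul, smul_eq_mul, sub_neg, hSW,
    dotProduct_transpose_mul_self_mulVec, dotProduct_transpose_mul_self_mulVec, hSz, ← hMx,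
    ← EuclideanSpace.norm_toLp_sq, ← EuclideanSpace.norm_toLp_sq, ← mul_pow] at key
  exact lt_of_pow_lt_pow_left₀ 2 (norm_nonneg _) key

theorem negDef_symmPart_neg_one_add_of_norm_lt_one {n : ℕ} {B : Matrix (Fin n) (Fin n) ℝ}
    (hB : ‖B‖ < 1) : NegDef ((1 / 2 : ℝ) • ((-1 + B) + (-1 + B)ᵀ)) := by
  intro x hx
  have hsym : x ⬝ᵥ ((1 / 2 : ℝ) • ((-1 + B) + (-1 + B)ᵀ)) *ᵥ x = x ⬝ᵥ (-1 + B) *ᵥ x := by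
    rw [smul_mulVec, add_mulVec, dotProduct_smul, dotProduct_add, dotProduct_transpose_mulVec,
      smul_eq_mul]
    ring
  have hBx : x ⬝ᵥ B *ᵥ x ≤ ‖B‖ * ‖toLp 2 x‖ ^ 2 :=
    calc x ⬝ᵥ B *ᵥ x = inner ℝ (toLp 2 x) (toLp 2 (B *ᵥ x)) := by
          rw [EuclideanSpace.inner_toLp_toLp, star_trivial, dotProduct_comm]
      _ ≤ ‖toLp 2 x‖ * ‖toLp 2 (B *ᵥ x)‖ := real_inner_le_norm _ _
      _ ≤ ‖toLp 2 x‖ * (‖B‖ * ‖toLp 2 x‖) := by gcongr; exact l2_opNorm_mulVec B (toLp 2 x)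
      _ = ‖B‖ * ‖toLp 2 x‖ ^ 2 := by ring
  have hpos : 0 < ‖toLp 2 x‖ := norm_pos_iff.mpr (by simpa using hx)
  rw [hsym, add_mulVec, neg_mulVec, one_mulVec, dotProduct_add, dotProduct_neg,
    ← EuclideanSpace.norm_toLp_sq]
  nlinarith [mul_lt_mul_of_pos_right hB (pow_pos hpos 2)]

/-- Let `g²WᵀPW - P ≺ 0` with `P = diag p` positive diagonal and `g > 0`. Then the
2-norm of `P^{1/2} W P^{-1/2}` is `< 1/g`; consequently, for any diagonal `D` with
`0 ⪯ D ⪯ gI`, the matrix measure `μ₂` of `-I + P^{1/2}WP^{-1/2}D` is negative, i.e.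
its symmetric part is negative definite. -/
theorem stmt12 {n : ℕ} (W : Matrix (Fin n) (Fin n) ℝ) (p : Fin n → ℝ) (g : ℝ)
    (hg : 0 < g) (hp : ∀ i, 0 < p i)
    (hcond : NegDef (g ^ 2 • (Wᵀ * Matrix.diagonal p * W) - Matrix.diagonal p)) :
    (∃ c : ℝ, c < 1 / g ∧ ∀ x : Fin n → ℝ,
        eNorm ((Matrix.diagonal (fun i => Real.sqrt (p i)) * W *
          Matrix.diagonal (fun i => (Real.sqrt (p i))⁻¹)).mulVec x) ≤ c * eNorm x) ∧
    ∀ D : Matrix (Fin n) (Fin n) ℝ, D.IsDiag → (∀ i, 0 ≤ D i i ∧ D i i ≤ g) →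
      NegDef ((1/2 : ℝ) •
        (let A := -1 + Matrix.diagonal (fun i => Real.sqrt (p i)) * W *
            Matrix.diagonal (fun i => (Real.sqrt (p i))⁻¹) * D
         A + Aᵀ)) := by
  set S := diagonal fun i => √(p i)
  set M := S * W * diagonal fun i => (√(p i))⁻¹
  have hST : S * diagonal (fun i => (√(p i))⁻¹) = 1 := by
    rw [diagonal_mul_diagonal, ← diagonal_one]
    exact congrArg diagonal (funext fun i => mul_inv_cancel₀ (Real.sqrt_pos.mpr (hp i)).ne')
  have hP : Sᵀ * S = diagonal p := by
    rw [diagonal_transpose, diagonal_mul_diagonal]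
    exact congrArg diagonal (funext fun i => Real.mul_self_sqrt (hp i).le)
  have hM : ‖M‖ < 1 / g := l2_opNorm_lt_of_norm_mulVec_lt M (one_div_pos.mpr hg) fun x hx => by
    rw [one_div_mul_eq_div, lt_div_iff₀' hg]
    exact mul_norm_mulVec_conj_lt_of_negDef hST (by rwa [hP]) x hx
  refine ⟨⟨‖M‖, hM, fun x => ?_⟩,
    fun D hD hDg => negDef_symmPart_neg_one_add_of_norm_lt_one ?_⟩
  · rw [eNorm_eq_norm_toLp, eNorm_eq_norm_toLp]
    exact l2_opNorm_mulVec M (toLp 2 x)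
  have hD_norm : ‖D‖ ≤ g := by
    rw [← hD.diagonal_diag, l2_opNorm_diagonal, pi_norm_le_iff_of_nonneg hg.le]
    exact fun i => abs_le.mpr ⟨(neg_nonpos.mpr hg.le).trans (hDg i).1, (hDg i).2⟩
  calc ‖M * D‖ ≤ ‖M‖ * ‖D‖ := l2_opNorm_mul M D
    _ ≤ ‖M‖ * g := by gcongr
    _ < 1 / g * g := by gcongr
    _ = 1 := one_div_mul_cancel hg.ne'
end

section
/- Let W be a lower triangular real n×n matrix with gW_{ii} - 1 < 0 for all i, and g > 0. Then there exists a diagonal positive definite matrix Γ such that for every diagonal D with 0 ⪯ D ⪯ gI, the symmetric part of -I + ΓWΓ⁻¹D is negative definite. Specifically Γ = diag(ε, ε², ..., εⁿ) works for all sufficiently small ε > 0. -/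
open Matrix

/-- Let `W` be lower triangular with `gW_{ii} - 1 < 0` for all `i`, `g > 0`. Then
`Γ = diag(ε, ε², …, εⁿ)` works for all sufficiently small `ε > 0`: for every diagonal `D`
with `0 ⪯ D ⪯ gI`, the symmetric part of `-I + ΓWΓ⁻¹D` is negative definite. -/
theorem stmt14 {n : ℕ} (W : Matrix (Fin n) (Fin n) ℝ) (g : ℝ) (hg : 0 < g)
    (hlow : ∀ i j : Fin n, i < j → W i j = 0)
    (hdiag : ∀ i, g * W i i - 1 < 0) :
    ∃ ε₀ > (0 : ℝ), ∀ ε : ℝ, 0 < ε → ε < ε₀ →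
      ∀ D : Matrix (Fin n) (Fin n) ℝ, D.IsDiag → (∀ i, 0 ≤ D i i ∧ D i i ≤ g) →
        NegDef ((1/2 : ℝ) •
          (let Γ := Matrix.diagonal (fun i : Fin n => ε ^ ((i : ℕ) + 1))
           let A := -1 + Γ * W * Γ⁻¹ * D
           A + Aᵀ)) := by
  rcases Nat.eq_zero_or_pos n with hn | hn
  · subst hn
    exact ⟨1, one_pos, fun ε _ _ D _ _ x hx => absurd (Subsingleton.elim x 0) hx⟩
  have hne : Nonempty (Fin n) := ⟨⟨0, hn⟩⟩
  set C : ℝ := (∑ i : Fin n, ∑ j : Fin n, |W i j|) + 1 with hCdef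
  have hCpos : 0 < C := by
    have : 0 ≤ ∑ i : Fin n, ∑ j : Fin n, |W i j| :=
      Finset.sum_nonneg fun _ _ => Finset.sum_nonneg fun _ _ => abs_nonneg _
    linarith
  have hCbd : ∀ i j, |W i j| ≤ C := by
    intro i j
    have h1 : |W i j| ≤ ∑ j' : Fin n, |W i j'| :=
      Finset.single_le_sum (f := fun j' => |W i j'|) (fun _ _ => abs_nonneg _)
        (Finset.mem_univ j)
    have h2 : (∑ j' : Fin n, |W i j'|) ≤ ∑ i' : Fin n, ∑ j' : Fin n, |W i' j'| :=
      Finset.single_le_sum (f := fun i' => ∑ j' : Fin n, |W i' j'|)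
        (fun i' _ => Finset.sum_nonneg fun _ _ => abs_nonneg _) (Finset.mem_univ i)
    linarith
  set c : ℝ := Finset.univ.inf' Finset.univ_nonempty
      (fun i : Fin n => min (1 - g * W i i) 1) with hcdef
  have hcpos : 0 < c := by
    rw [hcdef, Finset.lt_inf'_iff]
    intro i _
    have := hdiag i
    rw [lt_min_iff]
    constructor <;> linarith
  have hcle : ∀ i, c ≤ min (1 - g * W i i) 1 :=
    fun i => Finset.inf'_le _ (Finset.mem_univ i)
  have hCgn : 0 < C * g * n := by positivity
  refine ⟨min 1 (c / (C * g * n)), lt_min one_pos (div_pos hcpos hCgn), ?_⟩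
  intro ε hε hεlt D hD hDg
  have hε1 : ε ≤ 1 := le_of_lt (lt_of_lt_of_le hεlt (min_le_left _ _))
  have hεc : C * g * n * ε < c := by
    have h := lt_of_lt_of_le hεlt (min_le_right _ _)
    calc C * g * n * ε < C * g * n * (c / (C * g * n)) := by
          exact mul_lt_mul_of_pos_left h hCgn
      _ = c := by field_simp
  intro x hx
  -- entry formula
  set d : Fin n → ℝ := fun i => ε ^ ((i : ℕ) + 1) with hddef
  have hdne : ∀ i, d i ≠ 0 := fun i => pow_ne_zero _ (ne_of_gt hε)
  set A : Matrix (Fin n) (Fin n) ℝ :=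
    -1 + Matrix.diagonal d * W * (Matrix.diagonal d)⁻¹ * D with hAdef
  have hinv : (Matrix.diagonal d)⁻¹ = Matrix.diagonal (fun i => (d i)⁻¹) := by
    apply Matrix.inv_eq_right_inv
    rw [Matrix.diagonal_mul_diagonal, ← Matrix.diagonal_one]
    have : (fun i => d i * (d i)⁻¹) = fun _ : Fin n => (1 : ℝ) :=
      funext fun i => mul_inv_cancel₀ (hdne i)
    rw [this]
  have hDdiag : D = Matrix.diagonal (fun i => D i i) := (hD.diagonal_diag).symm
  have hA : ∀ i j, A i j =
      (if i = j then (-1 : ℝ) else 0) + d i * (d j)⁻¹ * (W i j * D j j) := by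
    intro i j
    have key : (Matrix.diagonal d * W * Matrix.diagonal (fun i => (d i)⁻¹) *
        Matrix.diagonal (fun i => D i i)) i j = d i * (d j)⁻¹ * (W i j * D j j) := by
      rw [Matrix.mul_diagonal, Matrix.mul_diagonal, Matrix.diagonal_mul]
      ring
    rw [hAdef, hinv]
    conv_lhs => rw [hDdiag]
    rw [Matrix.add_apply, Matrix.neg_apply, Matrix.one_apply, key]
    congr 1
    split_ifs <;> norm_num
  -- symmetric part entries
  have hAdiag : ∀ i, A i i = -1 + W i i * D i i := by
    intro i
    rw [hA i i, if_pos rfl, mul_inv_cancel₀ (hdne i), one_mul]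
  have hAoff : ∀ i j, i ≠ j → |A i j| ≤ C * g * ε := by
    intro i j hij
    rcases lt_or_gt_of_ne hij with h | h
    · rw [hA i j, if_neg hij, hlow i j h]
      simp
      positivity
    · -- j < i
      rw [hA i j, if_neg hij]
      have hpow : d i * (d j)⁻¹ = ε ^ ((i : ℕ) - (j : ℕ)) := by
        have he : (i : ℕ) - (j : ℕ) = ((i:ℕ)+1) - ((j:ℕ)+1) := by omega
        simp only [hddef]
        rw [he, pow_sub₀ ε (ne_of_gt hε) (by omega : (j:ℕ)+1 ≤ (i:ℕ)+1)]
      have hple : ε ^ ((i : ℕ) - (j : ℕ)) ≤ ε := by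
        have h1 : 1 ≤ (i : ℕ) - (j : ℕ) := by
          have : (j : ℕ) < i := h
          omega
        calc ε ^ ((i : ℕ) - (j : ℕ)) ≤ ε ^ 1 :=
              pow_le_pow_of_le_one (le_of_lt hε) hε1 h1
          _ = ε := pow_one ε
      rw [zero_add, abs_mul, hpow]
      have h1 : |ε ^ ((i : ℕ) - (j : ℕ))| = ε ^ ((i : ℕ) - (j : ℕ)) :=
        abs_of_nonneg (by positivity)
      rw [h1, abs_mul]
      have hDj := hDg j
      have hDabs : |D j j| ≤ g := abs_le.mpr ⟨by linarith, hDj.2⟩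
      calc ε ^ ((i:ℕ) - (j:ℕ)) * (|W i j| * |D j j|)
          ≤ ε * (C * g) := by
            apply mul_le_mul hple _ (by positivity) (le_of_lt hε)
            exact mul_le_mul (hCbd i j) hDabs (abs_nonneg _) (le_of_lt hCpos)
        _ = C * g * ε := by ring
  set S : Matrix (Fin n) (Fin n) ℝ := fun i j => (1/2 : ℝ) * (A i j + A j i) with hSdef
  have hSdiag : ∀ i, S i i ≤ -c := by
    intro i
    have : S i i = -1 + W i i * D i i := by
      rw [hSdef]; simp only; rw [hAdiag i]; ring
    rw [this]
    have hDi := hDg i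
    have hci := hcle i
    rw [le_min_iff] at hci
    rcases le_or_gt 0 (W i i) with hw | hw
    · have : W i i * D i i ≤ W i i * g := mul_le_mul_of_nonneg_left hDi.2 hw
      have hgW : W i i * g = g * W i i := mul_comm _ _
      nlinarith [hci.1]
    · have : W i i * D i i ≤ 0 := mul_nonpos_of_nonpos_of_nonneg (le_of_lt hw) hDi.1
      linarith [hci.2]
  have hSoff : ∀ i j, i ≠ j → |S i j| ≤ C * g * ε := by
    intro i j hij
    rw [hSdef]
    simp only
    calc |(1/2 : ℝ) * (A i j + A j i)| ≤ (1/2) * (|A i j| + |A j i|) := by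
          rw [abs_mul, abs_of_nonneg (by norm_num : (0:ℝ) ≤ 1/2)]
          exact mul_le_mul_of_nonneg_left (abs_add_le _ _) (by norm_num)
      _ ≤ (1/2) * ((C * g * ε) + (C * g * ε)) :=
          mul_le_mul_of_nonneg_left
            (add_le_add (hAoff i j hij) (hAoff j i (Ne.symm hij))) (by norm_num)
      _ = C * g * ε := by ring
  -- quadratic form
  show x ⬝ᵥ ((1/2 : ℝ) • (A + Aᵀ)).mulVec x < 0
  have hQ : x ⬝ᵥ ((1/2 : ℝ) • (A + Aᵀ)).mulVec x
      = ∑ i, ∑ j, x i * S i j * x j := by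
    have hmv : ∀ i, (((1/2 : ℝ) • (A + Aᵀ)).mulVec x) i
        = ∑ j, ((1/2 : ℝ) • (A + Aᵀ)) i j * x j := fun i => rfl
    rw [dotProduct]
    apply Finset.sum_congr rfl
    intro i _
    rw [hmv i, Finset.mul_sum]
    apply Finset.sum_congr rfl
    intro j _
    simp [Matrix.add_apply, Matrix.smul_apply, Matrix.transpose_apply, hSdef]
    ring
  rw [hQ]
  have hsum : ∑ i, ∑ j, x i * S i j * x j
      ≤ -c * (∑ i, x i ^ 2) + C * g * ε * (∑ i, |x i|) ^ 2 := by
    have hstep : ∀ i : Fin n, ∑ j, x i * S i j * x j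
        ≤ -c * x i ^ 2 + ∑ j, C * g * ε * (|x i| * |x j|) := by
      intro i
      rw [← Finset.add_sum_erase _ _ (Finset.mem_univ i),
          ← Finset.add_sum_erase _ (fun j => C * g * ε * (|x i| * |x j|)) (Finset.mem_univ i)]
      have hd : x i * S i i * x i ≤ -c * x i ^ 2 := by
        have h1 : x i * S i i * x i = S i i * x i ^ 2 := by ring
        rw [h1]
        exact mul_le_mul_of_nonneg_right (hSdiag i) (sq_nonneg _)
      have hoffsum : ∑ j ∈ Finset.univ.erase i, x i * S i j * x j
          ≤ ∑ j ∈ Finset.univ.erase i, C * g * ε * (|x i| * |x j|) := by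
        apply Finset.sum_le_sum
        intro j hj
        have hij : i ≠ j := (Finset.ne_of_mem_erase hj).symm
        calc x i * S i j * x j ≤ |x i * S i j * x j| := le_abs_self _
          _ = |S i j| * (|x i| * |x j|) := by rw [abs_mul, abs_mul]; ring
          _ ≤ C * g * ε * (|x i| * |x j|) :=
              mul_le_mul_of_nonneg_right (hSoff i j hij) (by positivity)
      have hextra : (0:ℝ) ≤ C * g * ε * (|x i| * |x i|) := by positivity
      linarith
    calc ∑ i, ∑ j, x i * S i j * x j
        ≤ ∑ i, (-c * x i ^ 2 + ∑ j, C * g * ε * (|x i| * |x j|)) :=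
          Finset.sum_le_sum fun i _ => hstep i
      _ = -c * (∑ i, x i ^ 2) + C * g * ε * (∑ i, |x i|) ^ 2 := by
          rw [Finset.sum_add_distrib, ← Finset.mul_sum, sq, Finset.sum_mul_sum]
          congr 1
          rw [Finset.mul_sum]
          apply Finset.sum_congr rfl
          intro i _
          rw [Finset.mul_sum]
  have hCS : (∑ i, |x i|) ^ 2 ≤ (n : ℝ) * ∑ i, x i ^ 2 := by
    have := sq_sum_le_card_mul_sum_sq (s := (Finset.univ : Finset (Fin n)))
      (f := fun i => |x i|)
    simp only [Finset.card_univ, Fintype.card_fin, sq_abs] at this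
    exact_mod_cast this
  have hxpos : 0 < ∑ i, x i ^ 2 := by
    have hex : ∃ i, x i ≠ 0 := Function.ne_iff.mp hx
    obtain ⟨i, hi⟩ := hex
    apply Finset.sum_pos' (fun j _ => sq_nonneg _)
    exact ⟨i, Finset.mem_univ i, by positivity⟩
  have h2 : C * g * ε * (∑ i, |x i|) ^ 2 ≤ C * g * ε * ((n : ℝ) * ∑ i, x i ^ 2) :=
    mul_le_mul_of_nonneg_left hCS (by positivity)
  have hfin : -c * (∑ i, x i ^ 2) + C * g * ε * ((n : ℝ) * ∑ i, x i ^ 2) < 0 := by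
    have : -c * (∑ i, x i ^ 2) + C * g * ε * ((n : ℝ) * ∑ i, x i ^ 2)
        = (C * g * (n:ℝ) * ε - c) * ∑ i, x i ^ 2 := by ring
    rw [this]
    apply mul_neg_of_neg_of_pos _ hxpos
    have : C * g * (n:ℝ) * ε = C * g * (n:ℝ) * ε := rfl
    linarith [hεc]
  linarith
end

section
/- Let W₁,…,W_p be real square matrices and M₁,…,M_p symmetric positive definite matrices such that M_i(W_iD_i - I) + (W_iD_i - I)ᵀM_i ⪯ -2λ M_i for all admissible diagonal D_i with entries in [0,g] and some λ > 0. Let L̃ be a block matrix with blocks L_{ij} satisfying M̃L̃ + L̃ᵀM̃ ⪯ 0 where M̃ = BlockDiag(k₁M₁,…,k_pM_p), k_i > 0. Then the block-diagonal Jacobian J̃ = BlockDiag(W₁D₁ - I, …, W_pD_p - I) + L̃ satisfies M̃J̃ + J̃ᵀM̃ ⪯ -2λ M̃. -/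
open Matrix

/-- `X ⪯ Y` for real matrices: `Y - X` positive semidefinite. -/
def MatLE {m : Type*} [Fintype m] (X Y : Matrix m m ℝ) : Prop := (Y - X).PosSemidef

/-! The block-diagonal part of `M̃J̃ + J̃ᵀM̃` is `BlockDiag(kᵢ(MᵢJᵢ + JᵢᵀMᵢ))`, which the
subnetwork bounds control block by block after scaling by `kᵢ ≥ 0`; the coupling contributes
`M̃L̃ + L̃ᵀM̃ ⪯ 0`, and `⪯` is preserved under addition. -/

namespace Matrix

variable {ι R : Type*} [Fintype ι] [DecidableEq ι] {m : ι → Type*} [∀ i, Fintype (m i)]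

theorem blockDiagonal'_mulVec_apply [NonUnitalNonAssocSemiring R]
    (f : ∀ i, Matrix (m i) (m i) R) (x : (Σ i, m i) → R) (i : ι) (a : m i) :
    (blockDiagonal' f *ᵥ x) ⟨i, a⟩ = (f i *ᵥ fun b => x ⟨i, b⟩) a := by
  simp only [mulVec, dotProduct, Fintype.sum_sigma]
  rw [Fintype.sum_eq_single i fun j hj => ?_]
  · simp [blockDiagonal'_apply_eq]
  · simp [blockDiagonal'_apply_ne f _ _ (Ne.symm hj)]

theorem PosSemidef.blockDiagonal' [Ring R] [PartialOrder R] [StarRing R] [IsOrderedAddMonoid R]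
    {f : ∀ i, Matrix (m i) (m i) R} (hf : ∀ i, (f i).PosSemidef) :
    (Matrix.blockDiagonal' f).PosSemidef := by
  refine .of_dotProduct_mulVec_nonneg
    (isHermitian_blockDiagonal'_iff.mpr fun i => (hf i).isHermitian) fun x => ?_
  have hquad : star x ⬝ᵥ (Matrix.blockDiagonal' f *ᵥ x)
      = ∑ i, star (fun a => x ⟨i, a⟩) ⬝ᵥ (f i *ᵥ fun a => x ⟨i, a⟩) := by
    simp only [dotProduct, Fintype.sum_sigma, blockDiagonal'_mulVec_apply]; rfl
  rw [hquad]
  exact Finset.sum_nonneg fun i _ => (hf i).dotProduct_mulVec_nonneg _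

theorem mul_add_transpose_mul_distrib {n : Type*} [Fintype n] [NonUnitalNonAssocSemiring R]
    (M J L : Matrix n n R) :
    M * (J + L) + (J + L)ᵀ * M = (M * J + Jᵀ * M) + (M * L + Lᵀ * M) := by
  rw [transpose_add, Matrix.mul_add, Matrix.add_mul]
  abel

theorem blockDiagonal'_mul_add_transpose_mul [NonUnitalNonAssocSemiring R]
    (M J : ∀ i, Matrix (m i) (m i) R) :
    blockDiagonal' M * blockDiagonal' J + (blockDiagonal' J)ᵀ * blockDiagonal' M
      = blockDiagonal' fun i => M i * J i + (J i)ᵀ * M i := by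
  rw [blockDiagonal'_transpose, ← blockDiagonal'_mul, ← blockDiagonal'_mul,
    ← blockDiagonal'_add]
  rfl

end Matrix

namespace MatLE

variable {n : Type*} [Fintype n]

theorem add {A B C D : Matrix n n ℝ} (hAB : MatLE A B) (hCD : MatLE C D) :
    MatLE (A + C) (B + D) := by
  unfold MatLE at *
  rw [add_sub_add_comm]
  exact hAB.add hCD

theorem smul {A B : Matrix n n ℝ} (hAB : MatLE A B) {c : ℝ} (hc : 0 ≤ c) :
    MatLE (c • A) (c • B) := by
  unfold MatLE at *
  rw [← smul_sub]
  exact hAB.smul hc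

theorem blockDiagonal' {ι : Type*} [Fintype ι] [DecidableEq ι] {m : ι → Type*}
    [∀ i, Fintype (m i)] {A B : ∀ i, Matrix (m i) (m i) ℝ} (hAB : ∀ i, MatLE (A i) (B i)) :
    MatLE (Matrix.blockDiagonal' A) (Matrix.blockDiagonal' B) := by
  unfold MatLE at *
  rw [← blockDiagonal'_sub]
  exact .blockDiagonal' hAB

end MatLE

theorem stmt17_general {p : ℕ} {N : Fin p → ℕ}
    (W : ∀ i, Matrix (Fin (N i)) (Fin (N i)) ℝ)
    (M : ∀ i, Matrix (Fin (N i)) (Fin (N i)) ℝ)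
    (g lam : ℝ)
    (hsub : ∀ i, ∀ D : Matrix (Fin (N i)) (Fin (N i)) ℝ,
      D.IsDiag → (∀ a, 0 ≤ D a a ∧ D a a ≤ g) →
      MatLE (M i * (W i * D - 1) + (W i * D - 1)ᵀ * M i) ((-(2 * lam)) • M i))
    (k : Fin p → ℝ) (hk : ∀ i, 0 < k i)
    (Mtil : Matrix ((i : Fin p) × Fin (N i)) ((i : Fin p) × Fin (N i)) ℝ)
    (hMtil : Mtil = Matrix.blockDiagonal' (fun i => k i • M i))
    (Ltil : Matrix ((i : Fin p) × Fin (N i)) ((i : Fin p) × Fin (N i)) ℝ)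
    (hLtil : MatLE (Mtil * Ltil + Ltilᵀ * Mtil) 0)
    (D : ∀ i, Matrix (Fin (N i)) (Fin (N i)) ℝ)
    (hDdiag : ∀ i, (D i).IsDiag) (hDbound : ∀ i a, 0 ≤ D i a a ∧ D i a a ≤ g)
    (Jtil : Matrix ((i : Fin p) × Fin (N i)) ((i : Fin p) × Fin (N i)) ℝ)
    (hJtil : Jtil = Matrix.blockDiagonal' (fun i => W i * D i - 1) + Ltil) :
    MatLE (Mtil * Jtil + Jtilᵀ * Mtil) ((-(2 * lam)) • Mtil) := by
  have hblocks : MatLE (Mtil * blockDiagonal' (fun i => W i * D i - 1)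
      + (blockDiagonal' (fun i => W i * D i - 1))ᵀ * Mtil) ((-(2 * lam)) • Mtil) := by
    rw [hMtil, blockDiagonal'_mul_add_transpose_mul, ← blockDiagonal'_smul]
    refine MatLE.blockDiagonal' fun i => ?_
    simpa only [smul_mul_assoc, mul_smul_comm, ← smul_add, Pi.smul_apply, smul_comm (k i)]
      using (hsub i (D i) (hDdiag i) (hDbound i)).smul (hk i).le
  rw [hJtil, mul_add_transpose_mul_distrib, ← add_zero ((-(2 * lam)) • Mtil)]
  exact hblocks.add hLtil

/-- Network of networks: if each subnetwork Jacobian `Jᵢ = WᵢDᵢ - I` (for admissible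
diagonal `Dᵢ` with entries in `[0,g]`) satisfies `MᵢJᵢ + JᵢᵀMᵢ ⪯ -2lamMᵢ`, and the
interconnection matrix `L̃` satisfies `M̃L̃ + L̃ᵀM̃ ⪯ 0` with
`M̃ = BlockDiag(k₁M₁,…,k_pM_p)`, `kᵢ > 0`, then `J̃ = BlockDiag(J₁,…,J_p) + L̃`
satisfies `M̃J̃ + J̃ᵀM̃ ⪯ -2lamM̃`. -/
theorem stmt17 {p : ℕ} {N : Fin p → ℕ}
    (W : ∀ i, Matrix (Fin (N i)) (Fin (N i)) ℝ)
    (M : ∀ i, Matrix (Fin (N i)) (Fin (N i)) ℝ)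
    (hM : ∀ i, (M i).PosDef)
    (g lam : ℝ) (hg : 0 < g) (hlam : 0 < lam)
    (hsub : ∀ i, ∀ D : Matrix (Fin (N i)) (Fin (N i)) ℝ,
      D.IsDiag → (∀ a, 0 ≤ D a a ∧ D a a ≤ g) →
      MatLE (M i * (W i * D - 1) + (W i * D - 1)ᵀ * M i) ((-(2 * lam)) • M i))
    (k : Fin p → ℝ) (hk : ∀ i, 0 < k i)
    (Mtil : Matrix ((i : Fin p) × Fin (N i)) ((i : Fin p) × Fin (N i)) ℝ)
    (hMtil : Mtil = Matrix.blockDiagonal' (fun i => k i • M i))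
    (Ltil : Matrix ((i : Fin p) × Fin (N i)) ((i : Fin p) × Fin (N i)) ℝ)
    (hLtil : MatLE (Mtil * Ltil + Ltilᵀ * Mtil) 0)
    (D : ∀ i, Matrix (Fin (N i)) (Fin (N i)) ℝ)
    (hDdiag : ∀ i, (D i).IsDiag) (hDbound : ∀ i a, 0 ≤ D i a a ∧ D i a a ≤ g)
    (Jtil : Matrix ((i : Fin p) × Fin (N i)) ((i : Fin p) × Fin (N i)) ℝ)
    (hJtil : Jtil = Matrix.blockDiagonal' (fun i => W i * D i - 1) + Ltil) :
    MatLE (Mtil * Jtil + Jtilᵀ * Mtil) ((-(2 * lam)) • Mtil) :=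
  stmt17_general W M g lam hsub k hk Mtil hMtil Ltil hLtil D hDdiag hDbound Jtil hJtil
end
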